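/- Fix real numbers t₁ < t₂. The function α ↦ d_TV(U(t₁ − α, t₁ + α), U(t₂ − α, t₂ + α)) is antitone (non-increasing) on (0, ∞): for 0 < α ≤ α', the total variation distance between the uniform measures U(t₁ − α', t₁ + α') and U(t₂ − α', t₂ + α') is at most the total variation distance between U(t₁ − α, t₁ + α) and U(t₂ − α, t₂ + α). In particular, increasing the rotation-augmentation range α makes the two augmented environment distributions more similar in total variation. -/

import Mathlib

open MeasureTheory
open scoped ENNReal

/-- The uniform probability measure on `[a, b]`: Lebesgue measure restricted to `[a, b]`,
normalized by `1/(b − a)`. -/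
noncomputable def unif (a b : ℝ) : Measure ℝ :=
  (ENNReal.ofReal (b - a))⁻¹ • (volume.restrict (Set.Icc a b))

instance unif.isFiniteMeasure (a b : ℝ) : IsFiniteMeasure (unif a b) := by
  constructor
  rw [unif]
  rw [Measure.smul_apply, Measure.restrict_apply MeasurableSet.univ, Set.univ_inter,
    Real.volume_Icc, smul_eq_mul]
  rcases le_or_gt b a with h | h
  · have : ENNReal.ofReal (b - a) = 0 := by
      simpa using (sub_nonpos.mpr h)
    rw [this, mul_zero]
    exact ENNReal.zero_lt_top
  · rw [ENNReal.inv_mul_cancel (by simpa using sub_pos.mpr h) ENNReal.ofReal_ne_top]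
    exact ENNReal.one_lt_top

section aux

variable {t₁ t₂ α : ℝ}

lemma vol_sdiff₁ (ht : t₁ < t₂) :
    volume (Set.Icc (t₁ - α) (t₁ + α) \ Set.Icc (t₂ - α) (t₂ + α))
      = ENNReal.ofReal (min (2 * α) (t₂ - t₁)) := by
  have key : min (t₁ + α) (t₂ - α) - (t₁ - α) = min (2 * α) (t₂ - t₁) := by
    rw [← min_sub_sub_right]; congr 1 <;> ring
  apply le_antisymm
  · have hsub : Set.Icc (t₁ - α) (t₁ + α) \ Set.Icc (t₂ - α) (t₂ + α)
        ⊆ Set.Icc (t₁ - α) (min (t₁ + α) (t₂ - α)) := by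
      rintro x ⟨⟨hx1, hx2⟩, hx3⟩
      rw [Set.mem_Icc] at hx3
      push_neg at hx3
      refine ⟨hx1, le_min hx2 ?_⟩
      by_contra h
      push_neg at h
      exact absurd (hx3 h.le) (not_lt.mpr (hx2.trans (by linarith)))
    calc volume _ ≤ volume (Set.Icc (t₁ - α) (min (t₁ + α) (t₂ - α))) := measure_mono hsub
      _ = ENNReal.ofReal (min (t₁ + α) (t₂ - α) - (t₁ - α)) := Real.volume_Icc
      _ = _ := by rw [key]
  · have hsub : Set.Ico (t₁ - α) (min (t₁ + α) (t₂ - α))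
        ⊆ Set.Icc (t₁ - α) (t₁ + α) \ Set.Icc (t₂ - α) (t₂ + α) := by
      rintro x ⟨hx1, hx2⟩
      rw [lt_min_iff] at hx2
      exact ⟨⟨hx1, hx2.1.le⟩, fun hx => absurd hx.1 (not_le.mpr hx2.2)⟩
    calc ENNReal.ofReal (min (2 * α) (t₂ - t₁))
        = volume (Set.Ico (t₁ - α) (min (t₁ + α) (t₂ - α))) := by rw [Real.volume_Ico, key]
      _ ≤ _ := measure_mono hsub

lemma vol_sdiff₂ (ht : t₁ < t₂) :
    volume (Set.Icc (t₂ - α) (t₂ + α) \ Set.Icc (t₁ - α) (t₁ + α))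
      = ENNReal.ofReal (min (2 * α) (t₂ - t₁)) := by
  have key : t₂ + α - max (t₂ - α) (t₁ + α) = min (2 * α) (t₂ - t₁) := by
    rw [← min_sub_sub_left]; congr 1 <;> ring
  apply le_antisymm
  · have hsub : Set.Icc (t₂ - α) (t₂ + α) \ Set.Icc (t₁ - α) (t₁ + α)
        ⊆ Set.Icc (max (t₂ - α) (t₁ + α)) (t₂ + α) := by
      rintro x ⟨⟨hx1, hx2⟩, hx3⟩
      rw [Set.mem_Icc] at hx3
      push_neg at hx3
      refine ⟨max_le hx1 ?_, hx2⟩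
      by_contra h
      push_neg at h
      exact absurd (hx3 (by linarith)) (not_lt.mpr h.le)
    calc volume _ ≤ volume (Set.Icc (max (t₂ - α) (t₁ + α)) (t₂ + α)) := measure_mono hsub
      _ = ENNReal.ofReal (t₂ + α - max (t₂ - α) (t₁ + α)) := Real.volume_Icc
      _ = _ := by rw [key]
  · have hsub : Set.Ioc (max (t₂ - α) (t₁ + α)) (t₂ + α)
        ⊆ Set.Icc (t₂ - α) (t₂ + α) \ Set.Icc (t₁ - α) (t₁ + α) := by
      rintro x ⟨hx1, hx2⟩
      rw [max_lt_iff] at hx1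
      exact ⟨⟨hx1.1.le, hx2⟩, fun hx => absurd hx.2 (not_le.mpr hx1.2)⟩
    calc ENNReal.ofReal (min (2 * α) (t₂ - t₁))
        = volume (Set.Ioc (max (t₂ - α) (t₁ + α)) (t₂ + α)) := by rw [Real.volume_Ioc, key]
      _ ≤ _ := measure_mono hsub

lemma tv_eq (ht : t₁ < t₂) (hα : 0 < α) :
    ((unif (t₁ - α) (t₁ + α)).toSignedMeasure -
        (unif (t₂ - α) (t₂ + α)).toSignedMeasure).totalVariation Set.univ
      = 2 * (ENNReal.ofReal (2 * α))⁻¹ * ENNReal.ofReal (min (2 * α) (t₂ - t₁)) := by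
  set c : ℝ≥0∞ := (ENNReal.ofReal (2 * α))⁻¹ with hc
  set I₁ := Set.Icc (t₁ - α) (t₁ + α) with hI₁
  set I₂ := Set.Icc (t₂ - α) (t₂ + α) with hI₂
  have hc_ne_top : c ≠ ⊤ := by
    rw [hc, ENNReal.inv_ne_top]
    simpa using by positivity
  have hu₁ : unif (t₁ - α) (t₁ + α) = c • volume.restrict I₁ := by
    rw [unif, hc]; congr 2; ring
  have hu₂ : unif (t₂ - α) (t₂ + α) = c • volume.restrict I₂ := by
    rw [unif, hc]; congr 2; ring
  set p : Measure ℝ := c • volume.restrict (I₁ \ I₂) with hp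
  set n : Measure ℝ := c • volume.restrict (I₂ \ I₁) with hn
  have hmI₁ : MeasurableSet I₁ := measurableSet_Icc
  have hmI₂ : MeasurableSet I₂ := measurableSet_Icc
  haveI hpf : IsFiniteMeasure p := by
    constructor
    rw [hp, Measure.smul_apply, Measure.restrict_apply MeasurableSet.univ, Set.univ_inter,
      smul_eq_mul, vol_sdiff₁ ht]
    exact ENNReal.mul_lt_top hc_ne_top.lt_top ENNReal.ofReal_lt_top
  haveI hnf : IsFiniteMeasure n := by
    constructor
    rw [hn, Measure.smul_apply, Measure.restrict_apply MeasurableSet.univ, Set.univ_inter,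
      smul_eq_mul, vol_sdiff₂ ht]
    exact ENNReal.mul_lt_top hc_ne_top.lt_top ENNReal.ofReal_lt_top
  have hsing : p ⟂ₘ n := by
    refine ⟨I₂ \ I₁, hmI₂.diff hmI₁, ?_, ?_⟩
    · rw [hp, Measure.smul_apply, Measure.restrict_apply (hmI₂.diff hmI₁)]
      have : (I₂ \ I₁) ∩ (I₁ \ I₂) = ∅ := by
        ext x; simp only [Set.mem_inter_iff, Set.mem_diff, Set.mem_empty_iff_false, iff_false]
        tauto
      rw [this]; simp
    · rw [hn, Measure.smul_apply, Measure.restrict_apply (hmI₂.diff hmI₁).compl]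
      rw [Set.compl_inter_self]; simp
  have hadd : unif (t₁ - α) (t₁ + α) + n = unif (t₂ - α) (t₂ + α) + p := by
    rw [hu₁, hu₂, hp, hn, ← smul_add, ← smul_add,
      ← Measure.restrict_union Set.disjoint_sdiff_right (hmI₂.diff hmI₁),
      ← Measure.restrict_union Set.disjoint_sdiff_right (hmI₁.diff hmI₂),
      Set.union_diff_self, Set.union_diff_self, Set.union_comm]
  have hsm : (unif (t₁ - α) (t₁ + α)).toSignedMeasure -
      (unif (t₂ - α) (t₂ + α)).toSignedMeasure = p.toSignedMeasure - n.toSignedMeasure := by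
    ext i hi
    rw [VectorMeasure.sub_apply, VectorMeasure.sub_apply,
      Measure.toSignedMeasure_apply_measurable hi, Measure.toSignedMeasure_apply_measurable hi,
      Measure.toSignedMeasure_apply_measurable hi, Measure.toSignedMeasure_apply_measurable hi]
    have h := congrArg (fun m : Measure ℝ => m i) hadd
    simp only [Measure.add_apply] at h
    have h1 := measure_ne_top (unif (t₁ - α) (t₁ + α)) i
    have h2 := measure_ne_top (unif (t₂ - α) (t₂ + α)) i
    have h3 := measure_ne_top p i
    have h4 := measure_ne_top n i
    have h' := congrArg ENNReal.toReal h
    rw [ENNReal.toReal_add h1 h4, ENNReal.toReal_add h2 h3] at h'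
    simp only [measureReal_def]
    linarith
  have hj : ((unif (t₁ - α) (t₁ + α)).toSignedMeasure -
      (unif (t₂ - α) (t₂ + α)).toSignedMeasure).toJordanDecomposition
      = ⟨p, n, hsing⟩ := by
    apply MeasureTheory.JordanDecomposition.toSignedMeasure_injective
    rw [SignedMeasure.toSignedMeasure_toJordanDecomposition, hsm]
    rfl
  rw [SignedMeasure.totalVariation, hj]
  show (p + n) Set.univ = _
  rw [Measure.add_apply, hp, hn, Measure.smul_apply, Measure.smul_apply,
    Measure.restrict_apply MeasurableSet.univ, Measure.restrict_apply MeasurableSet.univ,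
    Set.univ_inter, Set.univ_inter, vol_sdiff₁ ht, vol_sdiff₂ ht, smul_eq_mul]
  ring

end aux

/-- For fixed `t₁ < t₂`, the total variation distance
`α ↦ d_TV(U(t₁ − α, t₁ + α), U(t₂ − α, t₂ + α))` is non-increasing in `α` on `(0, ∞)`. -/
theorem totalVariation_unif_antitone
    (t₁ t₂ : ℝ) (ht : t₁ < t₂) :
    ∀ α α' : ℝ, 0 < α → α ≤ α' →
      ((unif (t₁ - α') (t₁ + α')).toSignedMeasure -
          (unif (t₂ - α') (t₂ + α')).toSignedMeasure).totalVariation Set.univ ≤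
        ((unif (t₁ - α) (t₁ + α)).toSignedMeasure -
            (unif (t₂ - α) (t₂ + α)).toSignedMeasure).totalVariation Set.univ := by
  intro α α' hα hαα'
  have hα' : 0 < α' := lt_of_lt_of_le hα hαα'
  rw [tv_eq ht hα, tv_eq ht hα']
  have hd : (0:ℝ) < t₂ - t₁ := sub_pos.mpr ht
  have h2α : (0:ℝ) < 2 * α := by linarith
  have h2α' : (0:ℝ) < 2 * α' := by linarith
  rw [mul_assoc, mul_assoc]
  refine mul_le_mul_right ?_ 2
  rw [← ENNReal.ofReal_inv_of_pos h2α, ← ENNReal.ofReal_inv_of_pos h2α',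
    ← ENNReal.ofReal_mul (by positivity), ← ENNReal.ofReal_mul (by positivity)]
  apply ENNReal.ofReal_le_ofReal
  rcases le_total (t₂ - t₁) (2 * α) with h | h
  · rw [min_eq_right h, min_eq_right (h.trans (by linarith))]
    rw [inv_mul_eq_div, inv_mul_eq_div]
    exact div_le_div_of_nonneg_left hd.le h2α (by linarith)
  · rw [min_eq_left h, inv_mul_cancel₀ (ne_of_gt h2α)]
    rw [inv_mul_eq_div]
    exact (div_le_one h2α').mpr (min_le_left _ _)
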